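/- arXiv:1511.00531 — 2 statements merged into one kernel-verified Lean document; each statement's English description precedes it below -/
import Mathlib

section
/- (Theorem 1, upper bound, low-loss regime.) For every γ ∈ (1/√2, 1] and every γ-admissible triple (Π₀,Π₁,Π_∅), the guessing value satisfies V = (1/2)·Tr[ρ₀Π₀ + ρ₁Π₁] ≤ (2γ² + 1/√2)/4. -/
open Matrix Complex Kronecker BigOperators ComplexOrder

noncomputable section

abbrev Mat2 := Matrix (Fin 2) (Fin 2) ℂ
abbrev Mat4 := Matrix (Fin 2 × Fin 2) (Fin 2 × Fin 2) ℂ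

/-- Pauli X matrix -/
def PX : Mat2 := !![0, 1; 1, 0]

/-- Pauli Y matrix -/
def PY : Mat2 := !![0, -Complex.I; Complex.I, 0]

/-- sign (−1)^b for a bit b -/
def bsign (b : Bool) : ℂ := if b then -1 else 1

/-- boolean function f(x̄,ȳ) = (x₁·y₁) XOR x₂ XOR y₂ -/
def fxy (x y : Bool × Bool) : Bool := (((x.1 && y.1)).xor x.2).xor y.2

/-- qubit input states ω_{x̄}: ω_{(0,x₂)} = (I+(−1)^{x₂}X)/2, ω_{(1,x₂)} = (I+(−1)^{x₂}Y)/2 -/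
def omg (x : Bool × Bool) : Mat2 :=
  (1/2 : ℂ) • ((1 : Mat2) + bsign x.2 • (if x.1 then PY else PX))

/-- qubit input states τ_{ȳ} = (I+(−1)^{y₂}(X+(−1)^{y₁}Y)/√2)/2 -/
def tau (y : Bool × Bool) : Mat2 :=
  (1/2 : ℂ) • ((1 : Mat2) + (bsign y.2 / (Real.sqrt 2 : ℂ)) • (PX + bsign y.1 • PY))

/-- averaged input states ρ₀ (for c = false) and ρ₁ (for c = true) -/
def rho (c : Bool) : Mat4 :=
  (1/8 : ℂ) • ∑ x : Bool × Bool, ∑ y : Bool × Bool,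
    (if fxy x y = c then omg x ⊗ₖ tau y else 0)

/-- standard basis vectors of ℂ⁴ ≅ ℂ² ⊗ ℂ² -/
def ket (i j : Fin 2) : (Fin 2 × Fin 2) → ℂ := fun p => if p = (i, j) then 1 else 0

def PhiP : (Fin 2 × Fin 2) → ℂ := fun p => (1 / (Real.sqrt 2 : ℂ)) * (ket 0 0 p + ket 1 1 p)
def PhiM : (Fin 2 × Fin 2) → ℂ := fun p => (1 / (Real.sqrt 2 : ℂ)) * (ket 0 0 p - ket 1 1 p)
def PsiP : (Fin 2 × Fin 2) → ℂ := fun p => (1 / (Real.sqrt 2 : ℂ)) * (ket 0 1 p + ket 1 0 p)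
def PsiM : (Fin 2 × Fin 2) → ℂ := fun p => (1 / (Real.sqrt 2 : ℂ)) * (ket 0 1 p - ket 1 0 p)

/-- rank one projector |v⟩⟨v| -/
def proj (v : (Fin 2 × Fin 2) → ℂ) : Mat4 := Matrix.vecMulVec v (star v)

/-- a γ-admissible measurement triple -/
def Admissible (γ : ℝ) (P0 P1 Pe : Mat4) : Prop :=
  P0.PosSemidef ∧ P1.PosSemidef ∧ Pe.PosSemidef ∧
  P0 + P1 + Pe = 1 ∧
  ∀ x y : Bool × Bool, ((omg x ⊗ₖ tau y) * Pe).trace = 1 - (γ : ℂ)^2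

/-- guessing value V = (1/2)·Tr[ρ₀Π₀ + ρ₁Π₁] (a real number) -/
def Gval (P0 P1 : Mat4) : ℝ := (1/2) * ((rho false * P0 + rho true * P1).trace).re


/-!
Both averaged states are diagonal in the Bell basis up to the identity:
`ρ_c = I/4 + (−1)^c (|ψ⁺⟩⟨ψ⁺| − |ψ⁻⟩⟨ψ⁻|) / (4√2)`,
because `ρ₀ − ρ₁ = (X⊗X + Y⊗Y)/(4√2)`. Hence
`V = Tr(Π₀ + Π₁)/8 + (⟨ψ⁺|Π₀ − Π₁|ψ⁺⟩ + ⟨ψ⁻|Π₁ − Π₀|ψ⁻⟩)/(8√2)`.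
The sixteen product states `ω_x ⊗ τ_y` sum to `4 I`, so adding up the admissibility constraints
gives `Tr Π_∅ = 4(1 − γ²)`, i.e. `Tr(Π₀ + Π₁) = 4γ²`. Finally `±(Π₀ − Π₁) ≤ Π₀ + Π₁ ≤ I`
bounds each Bell-state expectation by `1`.
-/

lemma trace_vecMulVec_star_mul {n R : Type*} [Fintype n] [CommSemiring R] [Star R]
    (v : n → R) (P : Matrix n n R) :
    (vecMulVec v (star v) * P).trace = star v ⬝ᵥ (P *ᵥ v) := by
  rw [trace_mul_comm, mul_vecMulVec, trace_vecMulVec, dotProduct_comm]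

lemma posSemidef_one_sub_sub {n R : Type*} [DecidableEq n] [Ring R] [PartialOrder R]
    [StarRing R] [AddLeftMono R] {P Q S : Matrix n n R} (hQ : Q.PosSemidef) (hS : S.PosSemidef)
    (h : P + Q + S = 1) : (1 - (P - Q)).PosSemidef := by
  rw [show 1 - (P - Q) = Q + Q + S by rw [← h]; abel]
  exact (hQ.add hQ).add hS

lemma re_dotProduct_mulVec_le_one {n : Type*} [Fintype n] [DecidableEq n] {A : Matrix n n ℂ}
    (hA : (1 - A).PosSemidef) {v : n → ℂ} (hv : star v ⬝ᵥ v = 1) :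
    (star v ⬝ᵥ (A *ᵥ v)).re ≤ 1 := by
  have h := hA.dotProduct_mulVec_nonneg v
  rw [sub_mulVec, one_mulVec, dotProduct_sub, hv] at h
  simpa using (Complex.le_def.mp h).1

lemma sum_omg_kronecker_tau :
    ∑ x : Bool × Bool, ∑ y : Bool × Bool, omg x ⊗ₖ tau y = (4 : ℂ) • 1 := by
  simp only [Fintype.sum_prod_type, Fintype.sum_bool, omg, tau, bsign]
  simp only [smul_kronecker, kronecker_smul, add_kronecker, kronecker_add, one_kronecker_one,
    Bool.false_eq_true, if_true, if_false]
  module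

lemma rho_false_add_rho_true : rho false + rho true = (1/2 : ℂ) • 1 := by
  have h : rho false + rho true
      = (1/8 : ℂ) • ∑ x : Bool × Bool, ∑ y : Bool × Bool, omg x ⊗ₖ tau y := by
    simp only [rho, ← smul_add, ← Finset.sum_add_distrib]
    congr 1
    refine Finset.sum_congr rfl fun x _ => Finset.sum_congr rfl fun y _ => ?_
    rcases fxy x y <;> simp
  rw [h, sum_omg_kronecker_tau, smul_smul]
  norm_num

lemma rho_false_sub_rho_true :
    rho false - rho true = (1 / (4 * (Real.sqrt 2 : ℂ))) • (PX ⊗ₖ PX + PY ⊗ₖ PY) := by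
  simp only [rho, fxy, Fintype.sum_prod_type, Fintype.sum_bool]
  norm_num
  simp only [omg, tau, bsign, smul_kronecker, kronecker_smul, add_kronecker, kronecker_add,
    one_kronecker_one, Bool.false_eq_true, if_true, if_false]
  module

lemma ofReal_sqrt_two_mul_self : (Real.sqrt 2 : ℂ) * (Real.sqrt 2 : ℂ) = 2 := by
  rw [← Complex.ofReal_mul, Real.mul_self_sqrt zero_le_two]
  norm_num

lemma PX_kronecker_PX_add_PY_kronecker_PY :
    PX ⊗ₖ PX + PY ⊗ₖ PY = (2 : ℂ) • (proj PsiP - proj PsiM) := by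
  have hinv : (Real.sqrt 2 : ℂ)⁻¹ * (Real.sqrt 2 : ℂ)⁻¹ = 1 / 2 := by
    rw [← mul_inv, ofReal_sqrt_two_mul_self]; norm_num
  ext ⟨i, j⟩ ⟨k, l⟩
  fin_cases i <;> fin_cases j <;> fin_cases k <;> fin_cases l <;>
    simp [PX, PY, PsiP, PsiM, proj, ket, vecMulVec_apply, Prod.ext_iff, hinv] <;> norm_num

lemma rho_eq (c : Bool) :
    rho c = (1/4 : ℂ) • 1 + (bsign c / (4 * Real.sqrt 2)) • (proj PsiP - proj PsiM) := by
  have hs : (Real.sqrt 2 : ℂ) ≠ 0 := by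
    exact_mod_cast (Real.sqrt_pos.mpr zero_lt_two).ne'
  have hdiff :
      rho false - rho true = (1 / (2 * (Real.sqrt 2 : ℂ))) • (proj PsiP - proj PsiM) := by
    rw [rho_false_sub_rho_true, PX_kronecker_PX_add_PY_kronecker_PY, smul_smul]
    congr 1
    field_simp
    ring
  cases c <;> simp only [bsign, Bool.false_eq_true, if_true, if_false]
  · linear_combination (norm := module)
      (1/2 : ℂ) • rho_false_add_rho_true + (1/2 : ℂ) • hdiff
  · linear_combination (norm := module)
      (1/2 : ℂ) • rho_false_add_rho_true - (1/2 : ℂ) • hdiff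

lemma star_PsiP_dotProduct_self : star PsiP ⬝ᵥ PsiP = 1 := by
  simp [PsiP, ket, dotProduct, Fintype.sum_prod_type, Prod.ext_iff, ← mul_inv,
    ofReal_sqrt_two_mul_self]
  norm_num

lemma star_PsiM_dotProduct_self : star PsiM ⬝ᵥ PsiM = 1 := by
  simp [PsiM, ket, dotProduct, Fintype.sum_prod_type, Prod.ext_iff, ← mul_inv,
    ofReal_sqrt_two_mul_self]
  norm_num

lemma Admissible.trace_add {γ : ℝ} {P0 P1 Pe : Mat4} (h : Admissible γ P0 P1 Pe) :
    (P0 + P1).trace = 4 * (γ : ℂ) ^ 2 := by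
  obtain ⟨-, -, -, hsum, hPe⟩ := h
  have htrPe : Pe.trace = 4 * (1 - (γ : ℂ) ^ 2) := by
    have := congrArg (fun M => (M * Pe).trace) sum_omg_kronecker_tau
    simp only [Finset.sum_mul, trace_sum, hPe, Finset.sum_const, Finset.card_univ, smul_mul,
      one_mul, trace_smul, smul_eq_mul] at this
    norm_num at this
    exact this.symm
  have htr : (P0 + P1).trace + Pe.trace = 4 := by
    rw [← Matrix.trace_add, hsum, trace_one]
    norm_num
  linear_combination htr - htrPe

lemma Gval_eq (P0 P1 : Mat4) :
    Gval P0 P1 = (P0 + P1).trace.re / 8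
      + ((star PsiP ⬝ᵥ ((P0 - P1) *ᵥ PsiP)).re + (star PsiM ⬝ᵥ ((P1 - P0) *ᵥ PsiM)).re)
        / (8 * Real.sqrt 2) := by
  have htr : (rho false * P0 + rho true * P1).trace = (P0 + P1).trace / 4
      + (star PsiP ⬝ᵥ ((P0 - P1) *ᵥ PsiP) + star PsiM ⬝ᵥ ((P1 - P0) *ᵥ PsiM))
        / ((4 * Real.sqrt 2 : ℝ) : ℂ) := by
    simp only [rho_eq, bsign, proj, add_mul, sub_mul, smul_mul, one_mul, trace_add, trace_sub,
      trace_smul, trace_vecMulVec_star_mul, sub_mulVec, dotProduct_sub, smul_eq_mul,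
      Bool.false_eq_true, if_true, if_false]
    push_cast
    ring
  rw [Gval, htr, Complex.add_re, Complex.div_ofReal_re, Complex.add_re, Complex.div_ofNat_re]
  ring

theorem guessing_upper_bound_low_loss_general (γ : ℝ)
    (P0 P1 Pe : Mat4) (h : Admissible γ P0 P1 Pe) :
    Gval P0 P1 ≤ (2*γ^2 + 1/Real.sqrt 2)/4 := by
  have htr : (P0 + P1).trace.re = 4 * γ ^ 2 := by
    rw [h.trace_add]
    norm_cast
  obtain ⟨h0, h1, he, hsum, -⟩ := h
  have hPsiP : (star PsiP ⬝ᵥ ((P0 - P1) *ᵥ PsiP)).re ≤ 1 :=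
    re_dotProduct_mulVec_le_one (posSemidef_one_sub_sub h1 he hsum) star_PsiP_dotProduct_self
  have hPsiM : (star PsiM ⬝ᵥ ((P1 - P0) *ᵥ PsiM)).re ≤ 1 :=
    re_dotProduct_mulVec_le_one (posSemidef_one_sub_sub h0 he (by rw [← hsum]; abel))
      star_PsiM_dotProduct_self
  have hs : 0 < Real.sqrt 2 := Real.sqrt_pos.mpr zero_lt_two
  calc Gval P0 P1 ≤ 4 * γ ^ 2 / 8 + 2 / (8 * Real.sqrt 2) := by
        rw [Gval_eq, htr]
        gcongr
        linarith
    _ = (2*γ^2 + 1/Real.sqrt 2)/4 := by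
        field_simp
        ring

/-- upper bound, low-loss regime: for γ ∈ (1/√2, 1] and any γ-admissible
triple, V ≤ (2γ² + 1/√2)/4. -/
theorem guessing_upper_bound_low_loss (γ : ℝ) (hγ : 1/Real.sqrt 2 < γ) (hγ' : γ ≤ 1)
    (P0 P1 Pe : Mat4) (h : Admissible γ P0 P1 Pe) :
    Gval P0 P1 ≤ (2*γ^2 + 1/Real.sqrt 2)/4 :=
  guessing_upper_bound_low_loss_general γ P0 P1 Pe h
end
end

section
/- (Pretty good quantum strategy, high-loss regime.) Fix γ ∈ (0,1/2] and let φ = |Ψ⁺⟩⟨Ψ⁺| on ℂ²⊗ℂ². Let Q₀ = R₀ = 2γ|Ψ⁺⟩⟨Ψ⁺| and Q₁ = R₁ = 2γ|Ψ⁻⟩⟨Ψ⁻| act on (program ⊗ target) qubit pairs, and define the effective two-qubit operators M_{a,b} on systems A⊗B by M_{a,b}[(i,k),(j,l)] = Σ_{i',k',i'',k''} Q_a[(i,i'),(j,i'')]·R_b[(k,k'),(l,k'')]·φ[(i'',k''),(i',k')] (the partial trace over the target systems A'B' of (Q_a ⊗ R_b)(I_A ⊗ φ_{A'B'} ⊗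 I_B)). Then Π₀ := M_{0,0}+M_{1,1} = 2γ²|Ψ⁺⟩⟨Ψ⁺| and Π₁ := M_{0,1}+M_{1,0} = 2γ²|Ψ⁻⟩⟨Ψ⁻|; consequently (Π₀,Π₁,I₄−Π₀−Π₁) is a γ-admissible triple with V = (1/2)·Tr[ρ₀Π₀ + ρ₁Π₁] = γ²·(1 + 1/√2)/2, i.e., the normalized guessing probability equals 1/2 + 1/(2√2) and the postselected Bell value is 2√2. -/
open Matrix Complex Kronecker BigOperators ComplexOrder

noncomputable section

/-- effective two-qubit operator: partial trace over the target systems of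
    (Q_a ⊗ R_b)(I_A ⊗ φ_{A'B'} ⊗ I_B) -/
def effM (Q R phi : Mat4) : Mat4 := Matrix.of fun p q =>
  ∑ i' : Fin 2, ∑ k' : Fin 2, ∑ i'' : Fin 2, ∑ k'' : Fin 2,
    Q (p.1, i') (q.1, i'') * R (p.2, k') (q.2, k'') * phi (i'', k'') (i', k')

lemma hs2 : ((Real.sqrt 2 : ℝ) : ℂ)^2 = 2 := by
  norm_cast; rw [Real.sq_sqrt] <;> norm_num

lemma hsne : ((Real.sqrt 2 : ℝ) : ℂ) ≠ 0 := by norm_cast; positivity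

lemma hinv : ((Real.sqrt 2 : ℝ) : ℂ)⁻¹ * ((Real.sqrt 2 : ℝ) : ℂ)⁻¹ = 2⁻¹ := by
  rw [← mul_inv, ← sq, hs2]

lemma hs3 : ((Real.sqrt 2 : ℝ) : ℂ)^3 = 2 * (Real.sqrt 2 : ℂ) := by
  rw [pow_succ, hs2]; try ring
lemma hs4 : ((Real.sqrt 2 : ℝ) : ℂ)^4 = 4 := by
  have h : ((Real.sqrt 2 : ℝ) : ℂ)^4 = (((Real.sqrt 2 : ℝ) : ℂ)^2)^2 := by ring
  rw [h, hs2]; norm_num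
lemma hs5 : ((Real.sqrt 2 : ℝ) : ℂ)^5 = 4 * (Real.sqrt 2 : ℂ) := by
  rw [pow_succ, hs4]
lemma hs6 : ((Real.sqrt 2 : ℝ) : ℂ)^6 = 8 := by
  rw [pow_succ, hs5, mul_assoc, ← sq, hs2]; norm_num
lemma hs7 : ((Real.sqrt 2 : ℝ) : ℂ)^7 = 8 * (Real.sqrt 2 : ℂ) := by
  rw [pow_succ, hs6]
lemma hs8 : ((Real.sqrt 2 : ℝ) : ℂ)^8 = 16 := by
  rw [pow_succ, hs7, mul_assoc, ← sq, hs2]; norm_num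
lemma hs9 : ((Real.sqrt 2 : ℝ) : ℂ)^9 = 16 * (Real.sqrt 2 : ℂ) := by
  rw [pow_succ, hs8]

/-- indicator of the Ψ subspace -/
def ag (p : Fin 2 × Fin 2) : ℂ := if p = (0,1) then 1 else if p = (1,0) then 1 else 0
/-- signed indicator for Ψ⁻ -/
def sg (p : Fin 2 × Fin 2) : ℂ := if p = (0,1) then 1 else if p = (1,0) then -1 else 0
/-- indicator of the Φ subspace -/
def bg (p : Fin 2 × Fin 2) : ℂ := if p = (0,0) then 1 else if p = (1,1) then 1 else 0
/-- signed indicator for Φ⁻ -/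
def cg (p : Fin 2 × Fin 2) : ℂ := if p = (0,0) then 1 else if p = (1,1) then -1 else 0

lemma projPsiP_eq : proj PsiP = Matrix.of fun p q => ag p * ag q / 2 := by
  ext ⟨i, k⟩ ⟨j, l⟩
  fin_cases i <;> fin_cases k <;> fin_cases j <;> fin_cases l <;>
    · simp [proj, PsiP, ket, Matrix.vecMulVec, Prod.ext_iff, hinv, ag]; try norm_num

lemma projPsiM_eq : proj PsiM = Matrix.of fun p q => sg p * sg q / 2 := by
  ext ⟨i, k⟩ ⟨j, l⟩
  fin_cases i <;> fin_cases k <;> fin_cases j <;> fin_cases l <;>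
    · simp [proj, PsiM, ket, Matrix.vecMulVec, Prod.ext_iff, hinv, sg]; try norm_num

lemma projPhiP_eq : proj PhiP = Matrix.of fun p q => bg p * bg q / 2 := by
  ext ⟨i, k⟩ ⟨j, l⟩
  fin_cases i <;> fin_cases k <;> fin_cases j <;> fin_cases l <;>
    · simp [proj, PhiP, ket, Matrix.vecMulVec, Prod.ext_iff, hinv, bg]; try norm_num

lemma projPhiM_eq : proj PhiM = Matrix.of fun p q => cg p * cg q / 2 := by
  ext ⟨i, k⟩ ⟨j, l⟩
  fin_cases i <;> fin_cases k <;> fin_cases j <;> fin_cases l <;>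
    · simp [proj, PhiM, ket, Matrix.vecMulVec, Prod.ext_iff, hinv, cg]; try norm_num

lemma proj_psd (v : (Fin 2 × Fin 2) → ℂ) : (proj v).PosSemidef := by
  rw [proj, Matrix.vecMulVec_eq Unit, ← Matrix.conjTranspose_replicateCol]
  exact Matrix.posSemidef_self_mul_conjTranspose _

lemma smul_proj_eq (r : ℝ) (hr : 0 ≤ r) (v : (Fin 2 × Fin 2) → ℂ) :
    r • proj v = proj (fun p => (Real.sqrt r : ℂ) * v p) := by
  ext p q
  simp only [Matrix.smul_apply, proj, Matrix.vecMulVec_apply, Pi.star_apply, star_mul',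
    Complex.star_def, Complex.conj_ofReal]
  rw [Complex.real_smul]
  have : ((r:ℝ):ℂ) = (Real.sqrt r : ℂ) * (Real.sqrt r : ℂ) := by
    norm_cast; rw [Real.mul_self_sqrt hr]
  rw [this]; ring

lemma smul_proj_psd (r : ℝ) (hr : 0 ≤ r) (v : (Fin 2 × Fin 2) → ℂ) :
    (r • proj v).PosSemidef := by
  rw [smul_proj_eq r hr]; exact proj_psd _

lemma bell_complete : proj PhiP + proj PhiM + proj PsiP + proj PsiM = 1 := by
  rw [projPhiP_eq, projPhiM_eq, projPsiP_eq, projPsiM_eq]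
  ext ⟨i, k⟩ ⟨j, l⟩
  fin_cases i <;> fin_cases k <;> fin_cases j <;> fin_cases l <;>
    · simp [ag, sg, bg, cg, Prod.ext_iff, Matrix.one_apply]; try norm_num

set_option maxHeartbeats 1000000 in
lemma tr_kron_one : ∀ x y : Bool × Bool, ((omg x ⊗ₖ tau y)).trace = 1 := by
  rintro ⟨a, b⟩ ⟨c, d⟩
  rw [Matrix.trace_kronecker]
  cases a <;> cases b <;> cases c <;> cases d <;>
    · simp [Matrix.trace, omg, tau, PX, PY, bsign, Fin.sum_univ_two]
      ring

lemma tr_ag (A B : Mat2) :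
    ((A ⊗ₖ B) * (Matrix.of fun p q => ag p * ag q / 2)).trace
      = (A 0 0 * B 1 1 + A 0 1 * B 1 0 + A 1 0 * B 0 1 + A 1 1 * B 0 0)/2 := by
  simp [Matrix.trace, Matrix.mul_apply, Fintype.sum_prod_type, Fin.sum_univ_two,
    Matrix.kroneckerMap_apply, ag, Prod.ext_iff]
  ring

lemma tr_sg (A B : Mat2) :
    ((A ⊗ₖ B) * (Matrix.of fun p q => sg p * sg q / 2)).trace
      = (A 0 0 * B 1 1 - A 0 1 * B 1 0 - A 1 0 * B 0 1 + A 1 1 * B 0 0)/2 := by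
  simp [Matrix.trace, Matrix.mul_apply, Fintype.sum_prod_type, Fin.sum_univ_two,
    Matrix.kroneckerMap_apply, sg, Prod.ext_iff]
  ring

set_option maxHeartbeats 1000000 in
lemma trPPM : ∀ x y : Bool × Bool,
    ((omg x ⊗ₖ tau y) * (Matrix.of fun p q => ag p * ag q / 2)).trace
      + ((omg x ⊗ₖ tau y) * (Matrix.of fun p q => sg p * sg q / 2)).trace = 1/2 := by
  rintro ⟨a, b⟩ ⟨c, d⟩
  rw [tr_ag, tr_sg]
  cases a <;> cases b <;> cases c <;> cases d <;>
    · simp [omg, tau, PX, PY, bsign]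
      ring

set_option maxHeartbeats 2000000 in
lemma tr0 : (rho false * (Matrix.of fun p q => ag p * ag q / 2)).trace
    = (2 + (Real.sqrt 2 : ℂ))/8 := by
  simp [rho, Matrix.trace, Matrix.mul_apply, Matrix.sum_apply, Matrix.smul_apply,
    Fintype.sum_prod_type, Fin.sum_univ_two, Fintype.sum_bool, fxy,
    Matrix.kroneckerMap_apply, omg, tau, PX, PY, bsign, ag, Prod.ext_iff,
    Matrix.add_apply, Matrix.one_apply, apply_ite (fun M : Mat4 => M _ _)]
  field_simp
  ring_nf
  simp [hs2, hs3, hs4, hs5, hs6, hs7, hs8, hs9]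
  try ring

set_option maxHeartbeats 2000000 in
lemma tr1 : (rho true * (Matrix.of fun p q => sg p * sg q / 2)).trace
    = (2 + (Real.sqrt 2 : ℂ))/8 := by
  simp [rho, Matrix.trace, Matrix.mul_apply, Matrix.sum_apply, Matrix.smul_apply,
    Fintype.sum_prod_type, Fin.sum_univ_two, Fintype.sum_bool, fxy,
    Matrix.kroneckerMap_apply, omg, tau, PX, PY, bsign, sg, Prod.ext_iff,
    Matrix.add_apply, Matrix.one_apply, apply_ite (fun M : Mat4 => M _ _)]
  field_simp
  ring_nf
  simp [hs2, hs3, hs4, hs5, hs6, hs7, hs8, hs9]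
  try ring

set_option maxHeartbeats 2000000 in
lemma effM_P (γ : ℝ) :
    effM ((2*γ : ℝ) • proj PsiP) ((2*γ : ℝ) • proj PsiP) (proj PsiP)
      + effM ((2*γ : ℝ) • proj PsiM) ((2*γ : ℝ) • proj PsiM) (proj PsiP)
      = (2*γ^2 : ℝ) • proj PsiP := by
  rw [projPsiP_eq, projPsiM_eq]
  rw [← Matrix.ext_iff]
  simp only [Prod.forall, Fin.forall_fin_two]
  norm_num [effM, Fin.sum_univ_two, sg, ag, Prod.ext_iff, Matrix.smul_apply,
    Matrix.add_apply, Matrix.of_apply, Complex.real_smul]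
  try ring_nf
  all_goals tauto

set_option maxHeartbeats 2000000 in
lemma effM_M (γ : ℝ) :
    effM ((2*γ : ℝ) • proj PsiP) ((2*γ : ℝ) • proj PsiM) (proj PsiP)
      + effM ((2*γ : ℝ) • proj PsiM) ((2*γ : ℝ) • proj PsiP) (proj PsiP)
      = (2*γ^2 : ℝ) • proj PsiM := by
  rw [projPsiP_eq, projPsiM_eq]
  rw [← Matrix.ext_iff]
  simp only [Prod.forall, Fin.forall_fin_two]
  norm_num [effM, Fin.sum_univ_two, sg, ag, Prod.ext_iff, Matrix.smul_apply,
    Matrix.add_apply, Matrix.of_apply, Complex.real_smul]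
  try ring_nf
  all_goals tauto
/-- pretty good quantum strategy, high-loss regime. -/
theorem pretty_good_strategy_high_loss (γ : ℝ) (hγ : 0 < γ) (hγ' : γ ≤ 1/2) :
    effM ((2*γ : ℝ) • proj PsiP) ((2*γ : ℝ) • proj PsiP) (proj PsiP)
      + effM ((2*γ : ℝ) • proj PsiM) ((2*γ : ℝ) • proj PsiM) (proj PsiP)
      = (2*γ^2 : ℝ) • proj PsiP ∧
    effM ((2*γ : ℝ) • proj PsiP) ((2*γ : ℝ) • proj PsiM) (proj PsiP)
      + effM ((2*γ : ℝ) • proj PsiM) ((2*γ : ℝ) • proj PsiP) (proj PsiP)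
      = (2*γ^2 : ℝ) • proj PsiM ∧
    Admissible γ ((2*γ^2 : ℝ) • proj PsiP) ((2*γ^2 : ℝ) • proj PsiM)
      (1 - (2*γ^2 : ℝ) • proj PsiP - (2*γ^2 : ℝ) • proj PsiM) ∧
    Gval ((2*γ^2 : ℝ) • proj PsiP) ((2*γ^2 : ℝ) • proj PsiM)
      = γ^2 * (1 + 1/Real.sqrt 2)/2 ∧
    Gval ((2*γ^2 : ℝ) • proj PsiP) ((2*γ^2 : ℝ) • proj PsiM) / γ^2
      = 1/2 + 1/(2*Real.sqrt 2) ∧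
    8 * (Gval ((2*γ^2 : ℝ) • proj PsiP) ((2*γ^2 : ℝ) • proj PsiM) / γ^2 - 1/2)
      = 2*Real.sqrt 2 := by
  have h2 : Real.sqrt 2 ^ 2 = 2 := Real.sq_sqrt (by norm_num)
  have hspos : (0:ℝ) < Real.sqrt 2 := Real.sqrt_pos.mpr (by norm_num)
  have hGv : Gval ((2*γ^2 : ℝ) • proj PsiP) ((2*γ^2 : ℝ) • proj PsiM)
      = γ^2 * (2 + Real.sqrt 2)/4 := by
    have htr : (rho false * ((2*γ^2 : ℝ) • proj PsiP)
        + rho true * ((2*γ^2 : ℝ) • proj PsiM)).trace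
        = ((γ^2 * (2 + Real.sqrt 2)/2 : ℝ) : ℂ) := by
      rw [projPsiP_eq, projPsiM_eq, Matrix.mul_smul, Matrix.mul_smul,
        Matrix.trace_add, Matrix.trace_smul, Matrix.trace_smul, tr0, tr1]
      rw [Complex.real_smul]
      push_cast
      ring
    rw [Gval, htr, Complex.ofReal_re]
    ring
  refine ⟨effM_P γ, effM_M γ, ⟨?_, ?_, ?_, by abel, ?_⟩, ?_, ?_, ?_⟩
  · exact smul_proj_psd _ (by positivity) _
  · exact smul_proj_psd _ (by positivity) _
  · have hPe : (1 : Mat4) - (2*γ^2 : ℝ) • proj PsiP - (2*γ^2 : ℝ) • proj PsiM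
        = proj PhiP + proj PhiM + (1-2*γ^2 : ℝ) • proj PsiP
          + (1-2*γ^2 : ℝ) • proj PsiM := by
      rw [← bell_complete]; module
    have h1 : (0:ℝ) ≤ 1 - 2*γ^2 := by nlinarith
    rw [hPe]
    exact (((proj_psd _).add (proj_psd _)).add (smul_proj_psd _ h1 _)).add
      (smul_proj_psd _ h1 _)
  · intro x y
    have h := trPPM x y
    rw [Matrix.mul_sub, Matrix.mul_sub, Matrix.mul_one, Matrix.mul_smul, Matrix.mul_smul,
      Matrix.trace_sub, Matrix.trace_sub, Matrix.trace_smul, Matrix.trace_smul,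
      tr_kron_one x y, projPsiP_eq, projPsiM_eq, Complex.real_smul, Complex.real_smul]
    push_cast
    linear_combination (-(2:ℂ) * (γ:ℂ)^2) * h
  · rw [hGv]
    field_simp
    nlinarith [h2, sq_nonneg γ]
  · rw [hGv]
    have hne : γ ≠ 0 := ne_of_gt hγ
    field_simp
    nlinarith [h2, sq_nonneg γ]
  · rw [hGv]
    have hne : γ ≠ 0 := ne_of_gt hγ
    field_simp
    nlinarith [h2, sq_nonneg γ]
end
end
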